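/- Let m ≥ 3 be odd and let c_f ∈ Z_4^{2^m} be the truth table of a gbent function f(x,y) = 2a(x)(1+y) + 2b(x)y + y constructed from bent functions a,b : F_2^{m-1} → F_2. Then wt_E(c_f) = 2^m + 2^{m-1} ± 2^{(m+1)/2}; in particular, if m = 3 then wt_E(c_f) ∈ {8, 16}, and if m ≥ 5 then wt_E(c_f) ≥ 2^m/3 + 8. -/
import Mathlib


open Finset

def nCount {n : ℕ} (x : Fin n → ZMod 4) (a : ZMod 4) : ℕ :=
  (Finset.univ.filter (fun i => x i = a)).card

def wtE {n : ℕ} (x : Fin n → ZMod 4) : ℕ :=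
  nCount x 1 + 4 * nCount x 2 + nCount x 3

def walsh {n : ℕ} (f : (Fin n → ZMod 2) → ZMod 2) (v : Fin n → ZMod 2) : ℤ :=
  ∑ x : Fin n → ZMod 2, (-1 : ℤ) ^ (f x + ∑ i : Fin n, v i * x i).val

def IsBent {n : ℕ} (f : (Fin n → ZMod 2) → ZMod 2) : Prop :=
  ∀ v, walsh f v = 2 ^ (n / 2) ∨ walsh f v = -(2 ^ (n / 2))

/-- the gbent construction `f(x,y) = 2a(x)(1+y) + 2b(x)y + y` with values in `Z_4` -/
def gfun {m : ℕ} (a b : (Fin (m - 1) → ZMod 2) → ZMod 2)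
    (z : (Fin (m - 1) → ZMod 2) × ZMod 2) : ZMod 4 :=
  2 * ((a z.1).val : ZMod 4) * (1 + ((z.2).val : ZMod 4)) +
    2 * ((b z.1).val : ZMod 4) * ((z.2).val : ZMod 4) + ((z.2).val : ZMod 4)

/-- the truth table of `gfun a b` as a vector in `Z_4^{2^m}`, inputs listed in
lexicographic order (first coordinate most significant, the bit `y` least significant). -/
def cf (m : ℕ) (a b : (Fin (m - 1) → ZMod 2) → ZMod 2) : Fin (2 ^ m) → ZMod 4 :=
  fun k =>
    gfun a b
      (fun j : Fin (m - 1) => if Nat.testBit k.val (m - 1 - (j : ℕ)) then 1 else 0,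
       if Nat.testBit k.val 0 then 1 else 0)

/-! ### Auxiliary material -/

def w4 (z : ZMod 4) : ℕ := if z = 1 then 1 else if z = 2 then 4 else if z = 3 then 1 else 0

lemma zmod2_cases : ∀ z : ZMod 2, z = 0 ∨ z = 1 := by decide

lemma fin2_cases : ∀ t : Fin 2, t = 0 ∨ t = 1 := by decide

lemma wtE_eq_sum {n : ℕ} (x : Fin n → ZMod 4) : wtE x = ∑ i, w4 (x i) := by
  unfold wtE nCount w4
  rw [Finset.card_filter, Finset.card_filter, Finset.card_filter, Finset.mul_sum,
    ← Finset.sum_add_distrib, ← Finset.sum_add_distrib]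
  refine Finset.sum_congr rfl fun i _ => ?_
  have h : ∀ z : ZMod 4, ((if z = 1 then 1 else 0) + 4 * (if z = 2 then 1 else 0) +
      (if z = 3 then 1 else 0) : ℕ) =
      if z = 1 then 1 else if z = 2 then 4 else if z = 3 then 1 else 0 := by decide
  exact h (x i)

lemma apply_mk_eq {n : ℕ} {α : Type*} (v : Fin n → α) (i : Fin n) {j : ℕ} {hj : j < n}
    (h : j = (i : ℕ)) : v ⟨j, hj⟩ = v i := by
  congr 1
  exact Fin.ext h

def toPair (m : ℕ) (hm : 0 < m) (v : Fin m → Fin 2) : (Fin (m - 1) → ZMod 2) × ZMod 2 :=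
  (fun j => if v ⟨m - 1 - (j : ℕ), by have := j.2; omega⟩ = 1 then 1 else 0,
   if v ⟨0, hm⟩ = 1 then 1 else 0)

def toFn (m : ℕ) (p : (Fin (m - 1) → ZMod 2) × ZMod 2) : Fin m → Fin 2 :=
  fun i => if h : (i : ℕ) = 0 then (if p.2 = 1 then 1 else 0)
    else if p.1 ⟨m - 1 - (i : ℕ), by have := i.2; omega⟩ = 1 then 1 else 0

lemma d1 : ∀ t : Fin 2, (if (if t = 1 then (1 : ZMod 2) else 0) = 1 then (1 : Fin 2) else 0) = t := by
  decide

lemma d2 : ∀ z : ZMod 2, (if (if z = 1 then (1 : Fin 2) else 0) = 1 then (1 : ZMod 2) else 0) = z := by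
  decide

lemma toFn_mk_ne (m : ℕ) (p : (Fin (m - 1) → ZMod 2) × ZMod 2) (c : ℕ) (hc : c < m)
    (h0 : c ≠ 0) :
    toFn m p ⟨c, hc⟩ = if p.1 ⟨m - 1 - c, by omega⟩ = 1 then 1 else 0 := by
  unfold toFn
  exact dif_neg h0

lemma toFn_mk_zero (m : ℕ) (p : (Fin (m - 1) → ZMod 2) × ZMod 2) (hc : 0 < m) :
    toFn m p ⟨0, hc⟩ = if p.2 = 1 then 1 else 0 := by
  unfold toFn
  exact dif_pos rfl

lemma toPair_fst_mk (m : ℕ) (hm : 0 < m) (v : Fin m → Fin 2) (c : ℕ) (hc : c < m - 1) :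
    (toPair m hm v).1 ⟨c, hc⟩ = if v ⟨m - 1 - c, by omega⟩ = 1 then 1 else 0 := rfl

lemma toPair_bij (m : ℕ) (hm : 0 < m) : Function.Bijective (toPair m hm) := by
  have L : Function.LeftInverse (toFn m) (toPair m hm) := by
    intro v
    funext i
    obtain ⟨iv, hiv⟩ := i
    by_cases h : iv = 0
    · subst h
      rw [toFn_mk_zero m _ hiv]
      exact d1 _
    · rw [toFn_mk_ne m _ iv hiv h, toPair_fst_mk m hm v (m - 1 - iv) (by omega),
        apply_mk_eq v ⟨iv, hiv⟩ (by simp; omega)]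
      exact d1 _
  have R : Function.RightInverse (toFn m) (toPair m hm) := by
    intro p
    refine Prod.ext ?_ ?_
    · funext j
      obtain ⟨jv, hjv⟩ := j
      rw [toPair_fst_mk m hm (toFn m p) jv hjv,
        toFn_mk_ne m p (m - 1 - jv) (by omega) (by omega),
        apply_mk_eq p.1 ⟨jv, hjv⟩ (by simp; omega)]
      exact d2 _
    · show (if toFn m p ⟨0, hm⟩ = 1 then (1 : ZMod 2) else 0) = p.2
      rw [toFn_mk_zero m p hm]
      exact d2 _
  exact ⟨L.injective, R.surjective⟩

lemma testbit_fin {m : ℕ} (v : Fin m → Fin 2) (i : ℕ) (hi : i < m) :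
    (if Nat.testBit ((finFunctionFinEquiv v : Fin (2 ^ m)) : ℕ) i then (1 : ZMod 2) else 0) =
      (if v ⟨i, hi⟩ = 1 then 1 else 0) := by
  have hs : ((finFunctionFinEquiv.symm (finFunctionFinEquiv v)) ⟨i, hi⟩ : ℕ) =
      ((finFunctionFinEquiv v : Fin (2 ^ m)) : ℕ) / 2 ^ i % 2 := rfl
  rw [Equiv.symm_apply_apply] at hs
  rw [Nat.testBit_eq_decide_div_mod_eq, ← hs]
  rcases fin2_cases (v ⟨i, hi⟩) with h | h <;> rw [h] <;> simp

lemma cf_apply_equiv {m : ℕ} (hm : 0 < m) (a b : (Fin (m - 1) → ZMod 2) → ZMod 2)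
    (v : Fin m → Fin 2) :
    cf m a b (finFunctionFinEquiv v) = gfun a b (toPair m hm v) := by
  unfold cf
  congr 1
  refine Prod.ext ?_ ?_
  · funext j
    exact testbit_fin v (m - 1 - (j : ℕ)) (by have := j.2; omega)
  · exact testbit_fin v 0 hm

lemma key_sum {m : ℕ} (a b : (Fin (m - 1) → ZMod 2) → ZMod 2) (x : Fin (m - 1) → ZMod 2) :
    (∑ y : ZMod 2, w4 (gfun a b (x, y))) = (if a x = 1 then 4 else 0) + 1 := by
  rw [show (∑ y : ZMod 2, w4 (gfun a b (x, y))) =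
      w4 (gfun a b (x, 0)) + w4 (gfun a b (x, 1)) from Fin.sum_univ_two _]
  rcases zmod2_cases (a x) with h | h <;> rcases zmod2_cases (b x) with h' | h' <;>
    simp only [gfun, w4, h, h'] <;> decide

lemma wtE_cf (m : ℕ) (hm : 0 < m) (a b : (Fin (m - 1) → ZMod 2) → ZMod 2) :
    wtE (cf m a b) = 2 ^ (m - 1) + 4 * (univ.filter (fun x => a x = 1)).card := by
  rw [wtE_eq_sum]
  rw [← Equiv.sum_comp (finFunctionFinEquiv (m := 2) (n := m)) (fun k => w4 (cf m a b k))]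
  have e2 : ∀ v : Fin m → Fin 2, w4 (cf m a b (finFunctionFinEquiv v)) =
      w4 (gfun a b (toPair m hm v)) := fun v => by rw [cf_apply_equiv hm a b v]
  rw [Finset.sum_congr rfl (fun v _ => e2 v)]
  rw [Fintype.sum_bijective (toPair m hm) (toPair_bij m hm) _
    (fun p => w4 (gfun a b p)) (fun v => rfl)]
  rw [Fintype.sum_prod_type]
  rw [Finset.sum_congr rfl (fun x _ => key_sum a b x)]
  rw [Finset.sum_add_distrib, Finset.sum_const, smul_eq_mul, mul_one, card_univ]
  have h4 : ∀ x, (if a x = 1 then (4 : ℕ) else 0) = 4 * (if a x = 1 then 1 else 0) := by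
    intro x; split <;> ring
  simp_rw [h4]
  rw [← Finset.mul_sum, ← Finset.card_filter]
  have hcard : Fintype.card (Fin (m - 1) → ZMod 2) = 2 ^ (m - 1) := by
    simp [Fintype.card_fun]
  rw [hcard, add_comm]

lemma walsh_zero {n : ℕ} (f : (Fin n → ZMod 2) → ZMod 2) :
    walsh f 0 = (2 ^ n : ℤ) - 2 * (univ.filter (fun x => f x = 1)).card := by
  unfold walsh
  have h1 : ∀ x : Fin n → ZMod 2,
      (-1 : ℤ) ^ (f x + ∑ i : Fin n, (0 : Fin n → ZMod 2) i * x i).val =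
      if f x = 1 then -1 else 1 := by
    intro x
    simp only [Pi.zero_apply, zero_mul, Finset.sum_const_zero, add_zero]
    rcases zmod2_cases (f x) with h | h <;> rw [h] <;> decide
  rw [Finset.sum_congr rfl (fun x _ => h1 x)]
  rw [Finset.sum_ite, Finset.sum_const, Finset.sum_const]
  have hc := Finset.card_filter_add_card_filter_not
    (s := (univ : Finset (Fin n → ZMod 2))) (fun x => f x = 1)
  rw [Finset.card_univ] at hc
  have hcard : Fintype.card (Fin n → ZMod 2) = 2 ^ n := by simp [Fintype.card_fun]
  rw [hcard] at hc
  have hcz : ((univ.filter (fun x => f x = 1)).card : ℤ) +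
      ((univ.filter (fun x => ¬ f x = 1)).card : ℤ) = (2 : ℤ) ^ n := by
    exact_mod_cast hc
  rw [nsmul_eq_mul, nsmul_eq_mul]
  linarith

theorem cf_euclidean_weight_value {m : ℕ} (hm : Odd m) (hm3 : 3 ≤ m)
    (a b : (Fin (m - 1) → ZMod 2) → ZMod 2) (ha : IsBent a) (hb : IsBent b) :
    (wtE (cf m a b) = 2 ^ m + 2 ^ (m - 1) + 2 ^ ((m + 1) / 2) ∨
      wtE (cf m a b) = 2 ^ m + 2 ^ (m - 1) - 2 ^ ((m + 1) / 2)) ∧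
    (m = 3 → wtE (cf m a b) = 8 ∨ wtE (cf m a b) = 16) ∧
    (5 ≤ m → 2 ^ m / 3 + 8 ≤ wtE (cf m a b)) := by
  obtain ⟨t, ht⟩ := hm
  have ht1 : 1 ≤ t := by omega
  set N := (univ.filter (fun x => a x = 1)).card with hN
  have hNa : wtE (cf m a b) = 2 ^ (m - 1) + 4 * N := wtE_cf m (by omega) a b
  have hw := walsh_zero a
  -- exponent rewrites
  have hm1 : m - 1 = 2 * t := by omega
  have hs : (m - 1) / 2 = t := by omega
  have hs2 : (m + 1) / 2 = t + 1 := by omega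
  have hA : (2 : ℕ) ^ m = 2 ^ (2 * t) * 2 := by rw [ht, pow_succ]
  have hB : (2 : ℕ) ^ ((m + 1) / 2) = 2 ^ t * 2 := by rw [hs2, pow_succ]
  rw [hm1] at hNa
  have h2P : 2 ^ t * 2 ≤ 2 ^ (2 * t) := by
    calc 2 ^ t * 2 = 2 ^ (t + 1) := (pow_succ 2 t).symm
    _ ≤ 2 ^ (2 * t) := Nat.pow_le_pow_right (by norm_num) (by omega)
  have hC : ((2 : ℤ) ^ (m - 1)) = (2 : ℤ) ^ (2 * t) := by rw [hm1]
  have hC2 : ((2 : ℕ) ^ (m - 1)) = (2 : ℕ) ^ (2 * t) := by rw [hm1]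
  have main : wtE (cf m a b) = 2 ^ m + 2 ^ (m - 1) + 2 ^ ((m + 1) / 2) ∨
      wtE (cf m a b) = 2 ^ m + 2 ^ (m - 1) - 2 ^ ((m + 1) / 2) := by
    rcases ha 0 with h | h <;> rw [hw, hs, hC, ← hN] at h
    · -- walsh = +2^t :  N = 2^(2t-1) - 2^(t-1), weight takes minus sign
      right
      have hNat : 2 ^ (2 * t) = 2 * N + 2 ^ t := by
        have hZ : ((2 ^ (2 * t) : ℕ) : ℤ) = 2 * (N : ℤ) + ((2 ^ t : ℕ) : ℤ) := by
          push_cast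
          linarith [h]
        exact_mod_cast hZ
      rw [hNa, hA, hB, hC2]
      omega
    · left
      have hNat : 2 ^ (2 * t) + 2 ^ t = 2 * N := by
        have hZ : ((2 ^ (2 * t) : ℕ) : ℤ) + ((2 ^ t : ℕ) : ℤ) = 2 * (N : ℤ) := by
          push_cast
          linarith [h]
        exact_mod_cast hZ
      rw [hNa, hA, hB, hC2]
      omega
  refine ⟨main, ?_, ?_⟩
  · intro h3
    subst h3
    rcases main with h | h
    · right
      rw [h]
      norm_num
    · left
      rw [h]
      norm_num
  · intro h5
    have ht2 : 2 ≤ t := by omega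
    have hP4 : 4 ≤ 2 ^ t := by
      calc (4 : ℕ) = 2 ^ 2 := by norm_num
      _ ≤ 2 ^ t := Nat.pow_le_pow_right (by norm_num) ht2
    have h4P : 4 * 2 ^ t ≤ 2 ^ (2 * t) := by
      calc 4 * 2 ^ t = 2 ^ (t + 2) := by rw [pow_add]; ring
      _ ≤ 2 ^ (2 * t) := Nat.pow_le_pow_right (by norm_num) (by omega)
    rcases main with h | h <;> rw [h] <;> rw [hA, hB, hC2] <;> omega
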